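/- Let U be a finite set with |U| = n, let F be a finite family of subsets of U, and let M and k be positive integers. Let G be the graph whose vertex set is the disjoint union of F and U × {1,…,M}, whose edges are: all pairs of distinct members of F, together with the pair {F, (u,i)} for every F ∈ F, u ∈ U, and i ∈ {1,…,M} such that u ∈ F. If there exists a subfamily F' ⊆ F with |F'| = k whose union equals U, then the set S of vertices of G corresponding to the members of F' satisfies: |S| = k, the induced subgraph G[S] is connected, and the closed neighborhood N_G[S] has size at least M·n. -/

import Mathlib

/-- The gadget graph for the coverage reduction: a clique on the family `𝓕`, plus `M`
copies of each universe element, where the vertex of a set `A ∈ 𝓕` is adjacent to the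
copies `(u, i)` of exactly the elements `u ∈ A`. -/
def coverGraph {U : Type*} (𝓕 : Finset (Finset U)) (M : ℕ) :
    SimpleGraph ({A // A ∈ 𝓕} ⊕ (U × Fin M)) :=
  SimpleGraph.fromRel (fun x y =>
    match x, y with
    | Sum.inl _, Sum.inl _ => True
    | Sum.inl A, Sum.inr p => p.1 ∈ A.1
    | _, _ => False)

/-!
The vertices of a covering subfamily `F'` form a clique of `coverGraph 𝓕 M`, hence a connected
set, and since every element `u` lies in some member of `F'`, all `M` copies `(u, i)` are
dominated by `F'`.
-/

namespace SimpleGraph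

theorem IsClique.induce_connected {V : Type*} {G : SimpleGraph V} {s : Set V}
    (h : G.IsClique s) (hs : s.Nonempty) : (G.induce s).Connected := by
  have : Nonempty s := hs.to_subtype
  rw [induce_eq_top.mpr h]
  exact connected_top

end SimpleGraph

namespace coverGraph

variable {U : Type*} {𝓕 : Finset (Finset U)} {M : ℕ}

theorem adj_inl_inl {A B : {A // A ∈ 𝓕}} :
    (coverGraph 𝓕 M).Adj (Sum.inl A) (Sum.inl B) ↔ A ≠ B := by
  simp [coverGraph]

theorem adj_inl_inr {A : {A // A ∈ 𝓕}} {p : U × Fin M} :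
    (coverGraph 𝓕 M).Adj (Sum.inl A) (Sum.inr p) ↔ p.1 ∈ A.1 := by
  simp [coverGraph]

theorem isClique_range_inl : (coverGraph 𝓕 M).IsClique (Set.range Sum.inl) := by
  rintro _ ⟨A, rfl⟩ _ ⟨B, rfl⟩ hAB
  exact adj_inl_inl.mpr fun h => hAB (congrArg Sum.inl h)

end coverGraph

theorem Set.card_le_ncard_of_range_inr_subset {α β : Type*} [Finite α] [Fintype β]
    {s : Set (α ⊕ β)} (h : Set.range Sum.inr ⊆ s) : Fintype.card β ≤ s.ncard := by
  calc Fintype.card β = (Set.range (Sum.inr : β → α ⊕ β)).ncard := by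
        rw [Set.ncard_range_of_injective Sum.inr_injective, Nat.card_eq_fintype_card]
    _ ≤ s.ncard := Set.ncard_le_ncard h

theorem stmt_11_general {U : Type*} [Fintype U] [DecidableEq U]
    (𝓕 : Finset (Finset U)) (M k : ℕ) (hk : 0 < k)
    (F' : Finset (Finset U)) (hsub : F' ⊆ 𝓕) (hcard : F'.card = k)
    (hcover : ∀ u : U, ∃ A ∈ F', u ∈ A) :
    ∀ S : Finset ({A // A ∈ 𝓕} ⊕ (U × Fin M)),
      S = F'.attach.image (fun A =>
        (Sum.inl ⟨A.1, hsub A.2⟩ : {A // A ∈ 𝓕} ⊕ (U × Fin M))) →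
      S.card = k ∧
      ((coverGraph 𝓕 M).induce (S : Set ({A // A ∈ 𝓕} ⊕ (U × Fin M)))).Connected ∧
      M * Fintype.card U ≤
        {w : {A // A ∈ 𝓕} ⊕ (U × Fin M) |
          w ∈ S ∨ ∃ v ∈ S, (coverGraph 𝓕 M).Adj v w}.ncard := by
  intro S hS
  have mem_S {A : Finset U} (hA : A ∈ F') :
      (Sum.inl ⟨A, hsub hA⟩ : {A // A ∈ 𝓕} ⊕ (U × Fin M)) ∈ S :=
    hS ▸ Finset.mem_image_of_mem _ (Finset.mem_attach _ ⟨A, hA⟩)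
  refine ⟨?card, ?connected, ?dominated⟩
  case card =>
    rw [hS, Finset.card_image_of_injective, Finset.card_attach, hcard]
    intro A B h
    simp only [Sum.inl.injEq, Subtype.mk.injEq] at h
    exact Subtype.ext h
  case connected =>
    obtain ⟨A, hA⟩ := Finset.card_pos.mp (hcard ▸ hk)
    refine (coverGraph.isClique_range_inl.subset ?_).induce_connected ⟨_, mem_S hA⟩
    intro v hv
    rw [hS, Finset.mem_coe, Finset.mem_image] at hv
    obtain ⟨A, -, rfl⟩ := hv
    exact ⟨_, rfl⟩
  case dominated =>
    calc M * Fintype.card U = Fintype.card (U × Fin M) := by simp [mul_comm]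
      _ ≤ _ := Set.card_le_ncard_of_range_inr_subset ?_
    rintro _ ⟨⟨u, i⟩, rfl⟩
    obtain ⟨A, hA, hu⟩ := hcover u
    exact Or.inr ⟨_, mem_S hA, coverGraph.adj_inl_inr.mpr hu⟩

/-- Completeness of the coverage reduction: a `k`-subfamily covering all of `U` yields a
connected `k`-set dominating at least `M·n` vertices of the gadget graph. -/
theorem stmt_11 {U : Type*} [Fintype U] [DecidableEq U]
    (𝓕 : Finset (Finset U)) (M k : ℕ) (hM : 0 < M) (hk : 0 < k)
    (F' : Finset (Finset U)) (hsub : F' ⊆ 𝓕) (hcard : F'.card = k)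
    (hcover : ∀ u : U, ∃ A ∈ F', u ∈ A) :
    ∀ S : Finset ({A // A ∈ 𝓕} ⊕ (U × Fin M)),
      S = F'.attach.image (fun A =>
        (Sum.inl ⟨A.1, hsub A.2⟩ : {A // A ∈ 𝓕} ⊕ (U × Fin M))) →
      S.card = k ∧
      ((coverGraph 𝓕 M).induce (S : Set ({A // A ∈ 𝓕} ⊕ (U × Fin M)))).Connected ∧
      M * Fintype.card U ≤
        {w : {A // A ∈ 𝓕} ⊕ (U × Fin M) |
          w ∈ S ∨ ∃ v ∈ S, (coverGraph 𝓕 M).Adj v w}.ncard :=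
  stmt_11_general 𝓕 M k hk F' hsub hcard hcover
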